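/- arXiv:1002.1943 — 2 statements merged into one kernel-verified Lean document; each statement's English description precedes it below -/
import Mathlib

section
/- Let G be a graph whose vertex set V is countable, and suppose each vertex x has finite degree D(x). Fix a vertex x and define M_out(x) = 1 if there exists an edge e incident to x whose removal leaves x in a finite connected component, and M_out(x) = 0 otherwise; define M_in(x) to be the number of neighbors y of x such that removing the edge {x,y} leaves y in a finite component. If the component of x is infinite, then D(x) - 2 ≥ M_in(x) - M_out(x). -/
/-!
Every vertex `z ≠ x` of the component of `x` is reached from some neighbour `y` of `x` without
using the edge `xy`, so if all these "branches" at `x` were finite, the component of `x` would be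
finite too. Hence an infinite component has a neighbour `y₀` of `x` whose branch is infinite,
which already gives `M_in ≤ D - 1`. If moreover `M_out = 0`, the component of `x` stays infinite
after deleting `xy₀`, and the same argument there yields a second neighbour `y₁ ≠ y₀` with an
infinite branch, so `M_in ≤ D - 2`.
-/

open SimpleGraph

namespace SimpleGraph

variable {V : Type*} {G : SimpleGraph V} {x : V}

lemma Reachable.exists_adj_reachable_deleteEdges {z : V} (h : G.Reachable x z) (hz : z ≠ x) :
    ∃ y, G.Adj x y ∧ (G.deleteEdges {s(x, y)}).Reachable y z := by
  classical
  obtain ⟨p⟩ := h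
  obtain ⟨q, hq⟩ := p.toPath
  cases q with
  | nil => exact absurd rfl hz.symm
  | @cons _ y _ hxy t =>
    rw [Walk.cons_isPath_iff] at hq
    refine ⟨y, hxy, ⟨t.transfer _ fun e he => ?_⟩⟩
    rw [edgeSet_deleteEdges]
    refine ⟨t.edges_subset_edgeSet he, ?_⟩
    rintro rfl
    exact hq.2 (t.fst_mem_support_of_mem_edges he)

lemma supp_connectedComponentMk_subset_insert_biUnion :
    (G.connectedComponentMk x).supp ⊆
      insert x (⋃ y ∈ G.neighborSet x, ((G.deleteEdges {s(x, y)}).connectedComponentMk y).supp) := by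
  intro z hz
  rw [ConnectedComponent.mem_supp_iff, ConnectedComponent.eq] at hz
  rcases eq_or_ne z x with rfl | hzx
  · exact Set.mem_insert z _
  · obtain ⟨y, hy, hyz⟩ := hz.symm.exists_adj_reachable_deleteEdges hzx
    exact Set.mem_insert_of_mem x <| Set.mem_biUnion hy <| ConnectedComponent.sound hyz.symm

lemma exists_adj_infinite_supp_deleteEdges (hfin : (G.neighborSet x).Finite)
    (hx : (G.connectedComponentMk x).supp.Infinite) :
    ∃ y, G.Adj x y ∧ ((G.deleteEdges {s(x, y)}).connectedComponentMk y).supp.Infinite := by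
  by_contra! h
  exact hx <| ((hfin.biUnion h).insert x).subset supp_connectedComponentMk_subset_insert_biUnion

lemma exists_adj_ne_infinite_supp_deleteEdges {y₀ : V} (hfin : (G.neighborSet x).Finite)
    (hx : ((G.deleteEdges {s(x, y₀)}).connectedComponentMk x).supp.Infinite) :
    ∃ y, y ≠ y₀ ∧ G.Adj x y ∧
      ((G.deleteEdges {s(x, y)}).connectedComponentMk y).supp.Infinite := by
  obtain ⟨y, hy, hyinf⟩ := exists_adj_infinite_supp_deleteEdges
    (hfin.subset (neighborSet_mono (deleteEdges_le _) x)) hx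
  rw [deleteEdges_adj] at hy
  refine ⟨y, fun h => hy.2 (by rw [h]; rfl), hy.1, fun hfin' => hyinf (hfin'.subset ?_)⟩
  refine ConnectedComponent.connectedComponentMk_supp_subset_supp ?_ _ rfl
  rw [deleteEdges_deleteEdges]
  exact deleteEdges_anti Set.subset_union_right

lemma ncard_add_ncard_le_degree [G.LocallyFinite] {s t : Set V} (hs : s ⊆ G.neighborSet x)
    (ht : t ⊆ G.neighborSet x) (hst : Disjoint s t) : s.ncard + t.ncard ≤ G.degree x := by
  have hfin : (G.neighborSet x).Finite := (G.neighborSet x).toFinite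
  rw [← Set.ncard_union_eq hst (hfin.subset hs) (hfin.subset ht), ← card_neighborFinset_eq_degree,
    ← Set.ncard_coe_finset, coe_neighborFinset]
  exact Set.ncard_le_ncard (Set.union_subset hs ht)

end SimpleGraph

open Classical in
theorem mass_bound_of_infinite_component_general {V : Type*}
    (G : SimpleGraph V) [G.LocallyFinite] (x : V)
    (hx : (G.connectedComponentMk x).supp.Infinite)
    (Mout : ℕ)
    (hMout : Mout = if ∃ y, G.Adj x y ∧
        (((G.deleteEdges {s(x, y)}).connectedComponentMk x).supp.Finite) then 1 else 0)
    (Min : ℕ)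
    (hMin : Min = {y | G.Adj x y ∧
        (((G.deleteEdges {s(x, y)}).connectedComponentMk y).supp.Finite)}.ncard) :
    (Min : ℤ) - Mout ≤ (G.degree x : ℤ) - 2 := by
  subst hMin hMout
  set M := {y | G.Adj x y ∧ ((G.deleteEdges {s(x, y)}).connectedComponentMk y).supp.Finite}
  have hfin : (G.neighborSet x).Finite := (G.neighborSet x).toFinite
  have hM : M ⊆ G.neighborSet x := fun y hy => hy.1
  obtain ⟨y₀, hy₀, hy₀inf⟩ := exists_adj_infinite_supp_deleteEdges hfin hx
  split_ifs with hMout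
  · have := ncard_add_ncard_le_degree hM (Set.singleton_subset_iff.2 hy₀)
      (Set.disjoint_singleton_right.2 fun h => hy₀inf h.2)
    rw [Set.ncard_singleton] at this
    omega
  · push Not at hMout
    obtain ⟨y₁, hne, hy₁, hy₁inf⟩ := exists_adj_ne_infinite_supp_deleteEdges hfin (hMout y₀ hy₀)
    have := ncard_add_ncard_le_degree hM (Set.pair_subset hy₀ hy₁) <| by
      rw [Set.disjoint_right]
      rintro y (rfl | rfl) h
      exacts [hy₀inf h.2, hy₁inf h.2]
    rw [Set.ncard_pair hne.symm] at this
    omega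

open Classical in
/-- If the component of a vertex `x` in a locally finite graph is infinite, then
`D(x) - 2 ≥ M_in(x) - M_out(x)`, where `M_out(x)` is `1` if some edge incident to `x`
leaves `x` in a finite component upon removal (and `0` otherwise), and `M_in(x)` counts
the neighbours `y` of `x` left in a finite component upon removal of the edge `{x,y}`. -/
theorem mass_bound_of_infinite_component {V : Type*} [Countable V]
    (G : SimpleGraph V) [G.LocallyFinite] (x : V)
    (hx : (G.connectedComponentMk x).supp.Infinite)
    (Mout : ℕ)
    (hMout : Mout = if ∃ y, G.Adj x y ∧
        (((G.deleteEdges {s(x, y)}).connectedComponentMk x).supp.Finite) then 1 else 0)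
    (Min : ℕ)
    (hMin : Min = {y | G.Adj x y ∧
        (((G.deleteEdges {s(x, y)}).connectedComponentMk y).supp.Finite)}.ncard) :
    (Min : ℤ) - Mout ≤ (G.degree x : ℤ) - 2 :=
  mass_bound_of_infinite_component_general G x hx Mout hMout Min hMin
end

section
/- Let G' be a directed graph on a nonempty set of points in R^d in which every vertex has out-degree exactly 1, each vertex points to its nearest 'compatible' vertex, and suppose the underlying point set is non-equidistant. If G' contains no directed cycle of length 2, then G' contains no directed cycle of any length ≥ 2; consequently every weakly connected component of G' is infinite, and following outgoing edges from any vertex yields an infinite sequence x_0, x_1, x_2, ... with |x_{i+1} − x_i| strictly decreasing (a descending chain). -/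
/-!
If each point is sent to its nearest compatible point and `f (f y) ≠ y`, then `y` is a compatible
candidate for `f y`, so the edge leaving `f y` is no longer than the edge `y → f y`; the two edges
share the endpoint `f y` and have distinct other endpoints, so non-equidistance makes the
inequality strict. Edge lengths thus strictly decrease along every orbit, which forces the orbit
to be injective: no cycles, and infinitely many points.
-/

/-- A set `U ⊆ ℝ^d` is non-equidistant if no two distinct pairs of its points realize the
same distance. -/
def NonEquidistant {d : ℕ} (U : Set (EuclideanSpace ℝ (Fin d))) : Prop :=
  (∀ x y u v : U, x ≠ y → u ≠ v → (x ≠ u ∨ y ≠ v) → (x ≠ v ∨ y ≠ u) →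
    dist (x : EuclideanSpace ℝ (Fin d)) y ≠ dist (u : EuclideanSpace ℝ (Fin d)) v) ∧
  (∀ x y v : U, x ≠ y → y ≠ v → x ≠ v →
    dist (x : EuclideanSpace ℝ (Fin d)) y ≠ dist (y : EuclideanSpace ℝ (Fin d)) v)

open Function

theorem strictAnti_comp_iterate {α β : Type*} [Preorder β] {f : α → α} {φ : α → β}
    (hφ : ∀ y, φ (f y) < φ y) (x : α) : StrictAnti fun n : ℕ => φ (f^[n] x) :=
  strictAnti_nat_of_succ_lt fun n => by
    simpa only [iterate_succ_apply'] using hφ (f^[n] x)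

theorem injective_iterate_of_strictAnti_comp {α β : Type*} [Preorder β] {f : α → α}
    {φ : α → β} {x : α} (hφ : StrictAnti fun n : ℕ => φ (f^[n] x)) :
    Injective fun n : ℕ => f^[n] x :=
  Injective.of_comp (f := φ) hφ.injective

theorem dist_apply_apply_lt_of_isNearest {α : Type*} [PseudoMetricSpace α]
    (compat : α → α → Prop) (hsymm : ∀ x y, compat x y → compat y x) {f : α → α}
    (hfne : ∀ x, f x ≠ x) (hfcompat : ∀ x, compat x (f x))
    (hnearest : ∀ x y, compat x y → y ≠ x → dist x (f x) ≤ dist x y)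
    (hno2 : ∀ x, f (f x) ≠ x)
    (hiso : ∀ x y v : α, x ≠ y → y ≠ v → x ≠ v → dist x y ≠ dist y v) (y : α) :
    dist (f y) (f (f y)) < dist y (f y) := by
  have hle : dist (f y) (f (f y)) ≤ dist y (f y) := by
    rw [dist_comm y]
    exact hnearest (f y) y (hsymm y (f y) (hfcompat y)) (hfne y).symm
  exact hle.lt_of_ne (hiso y (f y) (f (f y)) (hfne y).symm (hfne (f y)).symm (hno2 y).symm).symm

theorem nearest_neighbour_graph_descending_chain_general {d : ℕ}
    (U : Set (EuclideanSpace ℝ (Fin d)))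
    (hne : NonEquidistant U)
    (compat : U → U → Prop) (hsymm : ∀ x y, compat x y → compat y x)
    (f : U → U)
    (hfne : ∀ x, f x ≠ x)
    (hfcompat : ∀ x, compat x (f x))
    (hnearest : ∀ x y : U, compat x y → y ≠ x →
      dist (x : EuclideanSpace ℝ (Fin d)) (f x) ≤ dist (x : EuclideanSpace ℝ (Fin d)) y)
    (hno2 : ∀ x, f (f x) ≠ x) :
    (∀ x : U, ∀ n : ℕ, 1 ≤ n → f^[n] x ≠ x) ∧
    (∀ x : U, (Set.range fun n : ℕ => f^[n] x).Infinite) ∧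
    (∀ x : U, StrictAnti fun n : ℕ =>
      dist ((f^[n] x : U) : EuclideanSpace ℝ (Fin d)) (f^[n + 1] x : U)) := by
  set δ : U → ℝ := fun y => dist (y : EuclideanSpace ℝ (Fin d)) (f y) with hδ
  have hstep : ∀ y, δ (f y) < δ y :=
    dist_apply_apply_lt_of_isNearest compat hsymm hfne hfcompat hnearest hno2 hne.2
  have hanti : ∀ x : U, StrictAnti fun n : ℕ =>
      dist ((f^[n] x : U) : EuclideanSpace ℝ (Fin d)) (f^[n + 1] x : U) := fun x => by
    simpa only [hδ, iterate_succ_apply'] using strictAnti_comp_iterate hstep x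
  have hinj : ∀ x : U, Injective fun n : ℕ => f^[n] x := fun x =>
    injective_iterate_of_strictAnti_comp (strictAnti_comp_iterate hstep x)
  refine ⟨fun x n hn hx => ?_, fun x => Set.infinite_range_of_injective (hinj x), hanti⟩
  have : n = 0 := hinj x (by simpa using hx)
  omega

/-- In the "nearest compatible point" functional graph on a non-equidistant point set,
if there is no directed cycle of length 2, then there is no directed cycle of any length
`≥ 2`; consequently every orbit is infinite (so every weakly connected component is
infinite), and following outgoing edges from any vertex yields a descending chain, i.e.
the successive edge lengths strictly decrease. -/
theorem nearest_neighbour_graph_descending_chain {d : ℕ}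
    (U : Set (EuclideanSpace ℝ (Fin d))) (hU : U.Nonempty)
    (hne : NonEquidistant U)
    (compat : U → U → Prop) (hsymm : ∀ x y, compat x y → compat y x)
    (f : U → U)
    (hfne : ∀ x, f x ≠ x)
    (hfcompat : ∀ x, compat x (f x))
    (hnearest : ∀ x y : U, compat x y → y ≠ x →
      dist (x : EuclideanSpace ℝ (Fin d)) (f x) ≤ dist (x : EuclideanSpace ℝ (Fin d)) y)
    (hno2 : ∀ x, f (f x) ≠ x) :
    (∀ x : U, ∀ n : ℕ, 1 ≤ n → f^[n] x ≠ x) ∧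
    (∀ x : U, (Set.range fun n : ℕ => f^[n] x).Infinite) ∧
    (∀ x : U, StrictAnti fun n : ℕ =>
      dist ((f^[n] x : U) : EuclideanSpace ℝ (Fin d)) (f^[n + 1] x : U)) :=
  nearest_neighbour_graph_descending_chain_general U hne compat hsymm f hfne hfcompat hnearest hno2
end
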